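/- arXiv:1109.4623 — 4 statements merged into one kernel-verified Lean document; each statement's English description precedes it below -/
import Mathlib

section
/- (Incremental Lemma, monotonicity of brave reasoning.) Let (D,W) be an NMU default theory, let q be a literal and let S be a set of literals such that W ∪ S is consistent and S does not influence q in (D,W). If q is in some extension of (D,W), then q is in some extension of (D, W ∪ S). -/
/-! Propositional formulas -/

inductive Form (V : Type) : Type
  | atom : V → Form V
  | tru  : Form V
  | fals : Form V
  | neg  : Form V → Form V
  | conj : Form V → Form V → Form V
  | disj : Form V → Form V → Form V

/-- Satisfaction of a formula by a valuation. -/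
def Form.sat {V : Type} (v : V → Prop) : Form V → Prop
  | .atom a => v a
  | .tru => True
  | .fals => False
  | .neg φ => ¬ Form.sat v φ
  | .conj φ ψ => Form.sat v φ ∧ Form.sat v ψ
  | .disj φ ψ => Form.sat v φ ∨ Form.sat v ψ

/-- Logical logClosure `T*` of a set of formulas. -/
def logClosure {V : Type} (T : Set (Form V)) : Set (Form V) :=
  { φ | ∀ v : V → Prop, (∀ ψ ∈ T, Form.sat v ψ) → Form.sat v φ }

/-- A default rule `α : β₁,…,β_m / γ` (`pre = none` means the prerequisite is missing). -/
structure Default (V : Type) : Type where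
  pre   : Option (Form V)
  justs : List (Form V)
  concl : Form V

/-- The stage sets `E_i` relative to a candidate extension `E`:
`E_0 = W`, `E_{i+1} = E_i* ∪ {γ | α:β₁,…,β_m/γ ∈ D, α ∈ E_i, ¬β₁ ∉ E, …, ¬β_m ∉ E}`. -/
def extStage {V : Type} (D : Set (Default V)) (W : Set (Form V)) (E : Set (Form V)) :
    ℕ → Set (Form V)
  | 0 => W
  | i + 1 =>
      logClosure (extStage D W E i) ∪
        { φ | ∃ d ∈ D, d.concl = φ ∧ (∀ a ∈ d.pre, a ∈ extStage D W E i) ∧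
              ∀ b ∈ d.justs, Form.neg b ∉ E }

/-- `E` is an extension of the default theory `(D, W)`. -/
def IsExtension {V : Type} (D : Set (Default V)) (W : Set (Form V)) (E : Set (Form V)) : Prop :=
  E = ⋃ i, extStage D W E i

/-- `(D, W) ⊨ φ`: every extension of `(D, W)` contains `φ`. -/
def entails {V : Type} (D : Set (Default V)) (W : Set (Form V)) (φ : Form V) : Prop :=
  ∀ E, IsExtension D W E → φ ∈ E

/-! Literals -/

/-- A literal: a letter together with a sign (`pos = true` means a positive literal). -/
structure Lit (V : Type) : Type where
  letter : V
  pos : Bool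

/-- The formula corresponding to a literal. -/
def Lit.toForm {V : Type} (l : Lit V) : Form V :=
  if l.pos then Form.atom l.letter else Form.neg (Form.atom l.letter)

/-- Negation of a literal (so that `¬¬a = a`). -/
def Lit.negate {V : Type} (l : Lit V) : Lit V := ⟨l.letter, !l.pos⟩

/-- A set of literals is consistent if it contains no complementary pair. -/
def LitConsistent {V : Type} (S : Set (Lit V)) : Prop := ∀ l ∈ S, l.negate ∉ S

/-! Normal mixed unary (NMU) default theories -/

/-- An NMU default `α : β / β` with `α` empty or a single literal and `β` a single literal. -/
structure NMUDefault (V : Type) : Type where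
  pre : Option (Lit V)
  concl : Lit V

/-- The general default rule corresponding to an NMU default. -/
def NMUDefault.toDefault {V : Type} (d : NMUDefault V) : Default V :=
  ⟨d.pre.map Lit.toForm, [d.concl.toForm], d.concl.toForm⟩

/-- `E` is an extension of the NMU theory `(D, W)`. -/
def NMU.IsExtension {V : Type} (D : Set (NMUDefault V)) (W : Set (Lit V))
    (E : Set (Form V)) : Prop :=
  _root_.IsExtension (NMUDefault.toDefault '' D) (Lit.toForm '' W) E

/-- The NMU theory `(D, W)` entails the literal `l`. -/
def NMU.entails {V : Type} (D : Set (NMUDefault V)) (W : Set (Lit V)) (l : Lit V) : Prop :=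
  _root_.entails (NMUDefault.toDefault '' D) (Lit.toForm '' W) l.toForm

/-- An NMU theory is normal unary (NU) if every nonempty prerequisite is positive. -/
def IsNU {V : Type} (D : Set (NMUDefault V)) : Prop :=
  ∀ d ∈ D, ∀ p ∈ d.pre, p.pos = true

/-! Atomic dependency graph -/

/-- Edge `(x, y)` of the atomic dependency graph: `x` occurs in the prerequisite and `y`
in the consequent of some default of `D`. -/
def depEdge {V : Type} (D : Set (NMUDefault V)) (x y : V) : Prop :=
  ∃ d ∈ D, (∃ p ∈ d.pre, p.letter = x) ∧ d.concl.letter = y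

/-- There is a path from `x` to `y` in the atomic dependency graph. -/
def depReach {V : Type} (D : Set (NMUDefault V)) : V → V → Prop :=
  Relation.ReflTransGen (depEdge D)

/-- A set of literals `S` influences a literal `l`. -/
def influences {V : Type} (D : Set (NMUDefault V)) (S : Set (Lit V)) (l : Lit V) : Prop :=
  ∃ t ∈ S, depReach D t.letter l.letter

/-!
An extension of an NMU theory `(D, W)` is the logical closure of a consistent set of literals
`M`, a *kernel*: `M` contains `W`, is closed under every default whose prerequisite lies
in `M` and whose consequent is consistent with `M`, and each literal of `M` has a derivation from
`W` that only fires defaults with consequent in `M`.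

Let `N` be a kernel of `(D, W)` with `q ∈ N`. A derivation of a literal that `S` does not
influence only passes through literals that `S` does not influence, so the literals of `N` not
influenced by `S`, together with `W ∪ S`, form a consistent set each of whose members is derivable
inside it. As in the semi-monotonicity of normal default logic, Zorn's lemma extends this set to a
maximal one with the same two properties, and maximality makes it a kernel of `(D, W ∪ S)`.
-/

variable {V : Type}

section Literals

lemma subset_logClosure (T : Set (Form V)) : T ⊆ logClosure T :=
  fun φ hφ _ hv => hv φ hφ

lemma logClosure_mono {T T' : Set (Form V)} (h : T ⊆ T') : logClosure T ⊆ logClosure T' :=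
  fun _ hφ v hv => hφ v fun ψ hψ => hv ψ (h hψ)

lemma logClosure_subset_logClosure_of_subset {T T' : Set (Form V)} (h : T ⊆ logClosure T') :
    logClosure T ⊆ logClosure T' :=
  fun _ hφ v hv => hφ v fun _ hψ => h hψ v hv

lemma Lit.negate_negate (l : Lit V) : l.negate.negate = l := by
  simp [Lit.negate]

lemma Lit.negate_ne (l : Lit V) : l.negate ≠ l := fun h => by
  simpa [Lit.negate] using congrArg Lit.pos h

lemma Lit.sat_toForm (v : V → Prop) (l : Lit V) :
    Form.sat v l.toForm ↔ (v l.letter ↔ l.pos = true) := by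
  obtain ⟨a, _ | _⟩ := l <;> simp [Lit.toForm, Form.sat]

lemma Lit.sat_negate_toForm (v : V → Prop) (l : Lit V) :
    Form.sat v l.negate.toForm ↔ ¬ Form.sat v l.toForm := by
  obtain ⟨a, _ | _⟩ := l <;> simp [Lit.toForm, Lit.negate, Form.sat]

lemma logClosure_eq_univ {T : Set (Form V)} {l : Lit V} (hl : l.toForm ∈ T)
    (hnl : l.negate.toForm ∈ T) : logClosure T = Set.univ :=
  Set.eq_univ_of_forall fun _ v hv => absurd (hv _ hl) ((Lit.sat_negate_toForm v l).1 (hv _ hnl))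

lemma LitConsistent.subset {M M' : Set (Lit V)} (hM : LitConsistent M) (h : M' ⊆ M) :
    LitConsistent M' :=
  fun l hl hnl => hM l (h hl) (h hnl)

lemma LitConsistent.insert {M : Set (Lit V)} {l : Lit V} (hM : LitConsistent M)
    (hl : l.negate ∉ M) : LitConsistent (insert l M) := by
  rintro m (rfl | hm) (hnm | hnm)
  · exact m.negate_ne hnm
  · exact hl hnm
  · exact hl (by rw [← hnm, Lit.negate_negate]; exact hm)
  · exact hM m hm hnm

lemma LitConsistent.sUnion_of_isChain {c : Set (Set (Lit V))} (hc : IsChain (· ⊆ ·) c)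
    (h : ∀ M ∈ c, LitConsistent M) : LitConsistent (⋃₀ c) := by
  rintro l ⟨M₁, hM₁, hl⟩ ⟨M₂, hM₂, hnl⟩
  rcases hc.total hM₁ hM₂ with h₁₂ | h₂₁
  · exact h M₂ hM₂ l (h₁₂ hl) hnl
  · exact h M₁ hM₁ l hl (h₂₁ hnl)

lemma LitConsistent.exists_sat {M : Set (Lit V)} (hM : LitConsistent M) {l : Lit V}
    (hl : l ∉ M) : ∃ v : V → Prop, (∀ m ∈ M, Form.sat v m.toForm) ∧ ¬ Form.sat v l.toForm := by
  -- A letter gets the sign of `l` exactly when `M` contains it with that sign.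
  obtain ⟨a, p⟩ := l
  refine ⟨fun b => (⟨b, p⟩ : Lit V) ∈ M ↔ p = true, fun ⟨b, pb⟩ hm => ?_, ?_⟩
  · have hnm := hM _ hm
    cases p <;> cases pb <;> simp_all [Lit.sat_toForm, Lit.negate]
  · cases p <;> simp_all [Lit.sat_toForm]

lemma Lit.toForm_mem_logClosure_iff {M : Set (Lit V)} (hM : LitConsistent M) (l : Lit V) :
    l.toForm ∈ logClosure (Lit.toForm '' M) ↔ l ∈ M := by
  refine ⟨fun h => ?_, fun h => subset_logClosure _ ⟨l, h, rfl⟩⟩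
  by_contra hl
  obtain ⟨v, hvM, hvl⟩ := hM.exists_sat hl
  exact hvl (h v (Set.forall_mem_image.2 hvM))

lemma Lit.neg_toForm_mem_logClosure_iff {M : Set (Lit V)} (hM : LitConsistent M) (l : Lit V) :
    Form.neg l.toForm ∈ logClosure (Lit.toForm '' M) ↔ l.negate ∈ M := by
  rw [← Lit.toForm_mem_logClosure_iff hM l.negate]
  simp only [logClosure, Set.mem_ofPred_eq, Form.sat, Lit.sat_negate_toForm]

end Literals

section Stages

variable {D : Set (Default V)} {W E T : Set (Form V)}

lemma logClosure_extStage_subset (i : ℕ) :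
    logClosure (extStage D W E i) ⊆ extStage D W E (i + 1) :=
  Set.subset_union_left

lemma extStage_monotone : Monotone (extStage D W E) :=
  monotone_nat_of_le_succ fun i => (subset_logClosure _).trans (logClosure_extStage_subset i)

lemma logClosure_subset_iUnion_extStage (hT : T.Finite) (h : T ⊆ ⋃ i, extStage D W E i) :
    logClosure T ⊆ ⋃ i, extStage D W E i := by
  obtain ⟨n, hn⟩ : ∃ n, T ⊆ extStage D W E n := by
    simpa using extStage_monotone.directed_le.exists_mem_subset_of_finset_subset_biUnion
      (s := hT.toFinset) (by simpa using h)
  exact ((logClosure_subset_logClosure_of_subset (hn.trans (subset_logClosure _))).trans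
    (logClosure_extStage_subset n)).trans (Set.subset_iUnion _ (n + 1))

lemma IsExtension.extStage_subset (hE : IsExtension D W E) (i : ℕ) : extStage D W E i ⊆ E :=
  (Set.subset_iUnion (extStage D W E) i).trans hE.symm.subset

lemma IsExtension.logClosure_subset (hE : IsExtension D W E) (hT : T.Finite) (h : T ⊆ E) :
    logClosure T ⊆ E :=
  (logClosure_subset_iUnion_extStage hT (h.trans hE.subset)).trans hE.symm.subset

end Stages

namespace NMU

variable {D : Set (NMUDefault V)} {W S B M N : Set (Lit V)} {E : Set (Form V)}

abbrev stage (D : Set (NMUDefault V)) (W : Set (Lit V)) (E : Set (Form V)) : ℕ → Set (Form V) :=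
  extStage (NMUDefault.toDefault '' D) (Lit.toForm '' W) E

lemma mem_stage_succ_iff {φ : Form V} {i : ℕ} :
    φ ∈ stage D W E (i + 1) ↔ φ ∈ logClosure (stage D W E i) ∨
      ∃ d ∈ D, d.concl.toForm = φ ∧ (∀ p ∈ d.pre, p.toForm ∈ stage D W E i) ∧
        Form.neg d.concl.toForm ∉ E := by
  simp [stage, extStage, NMUDefault.toDefault]

lemma exists_concl_mem_stage {d : NMUDefault V} (hd : d ∈ D)
    (hpre : ∀ p ∈ d.pre, ∃ i, p.toForm ∈ stage D W E i) (hneg : Form.neg d.concl.toForm ∉ E) :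
    ∃ i, d.concl.toForm ∈ stage D W E i := by
  obtain ⟨i, hi⟩ : ∃ i, ∀ p ∈ d.pre, p.toForm ∈ stage D W E i := by
    cases h : d.pre with
    | none => exact ⟨0, by simp⟩
    | some p =>
      obtain ⟨i, hi⟩ := hpre p h
      exact ⟨i, by simpa using hi⟩
  exact ⟨i + 1, mem_stage_succ_iff.2 (Or.inr ⟨d, hd, rfl, hi, hneg⟩)⟩

lemma IsExtension.mem_iff (hE : NMU.IsExtension D W E) {φ : Form V} :
    φ ∈ E ↔ ∃ i, φ ∈ stage D W E i := by
  conv_lhs => rw [hE]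
  exact Set.mem_iUnion

inductive DerivableIn (D : Set (NMUDefault V)) (B M : Set (Lit V)) : Lit V → Prop
  | base {l : Lit V} : l ∈ B → DerivableIn D B M l
  | step {d : NMUDefault V} : d ∈ D → (∀ p ∈ d.pre, DerivableIn D B M p) → d.concl ∈ M →
      DerivableIn D B M d.concl

lemma DerivableIn.mono {M' : Set (Lit V)} {l : Lit V} (h : DerivableIn D B M l) (hM : M ⊆ M') :
    DerivableIn D B M' l := by
  induction h with
  | base hl => exact .base hl
  | step hd _ hc ih => exact .step hd ih (hM hc)

lemma DerivableIn.mem_union {l : Lit V} (h : DerivableIn D B M l) :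
    l ∈ B ∪ NMUDefault.concl '' D := by
  cases h with
  | base hl => exact Or.inl hl
  | step hd _ _ => exact Or.inr ⟨_, hd, rfl⟩

structure Kernel (D : Set (NMUDefault V)) (W M : Set (Lit V)) : Prop where
  consistent : LitConsistent M
  subset : W ⊆ M
  closed : ∀ d ∈ D, (∀ p ∈ d.pre, p ∈ M) → d.concl.negate ∉ M → d.concl ∈ M
  grounded : ∀ l ∈ M, DerivableIn D W M l

lemma Kernel.finite (hM : Kernel D W M) (hW : W.Finite) (hD : D.Finite) : M.Finite :=
  (hW.union (hD.image _)).subset fun l hl => (hM.grounded l hl).mem_union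

section KernelToExtension

variable (hM : Kernel D W M)
include hM

lemma Kernel.stage_subset (i : ℕ) :
    stage D W (logClosure (Lit.toForm '' M)) i ⊆ logClosure (Lit.toForm '' M) := by
  induction i with
  | zero => exact (Set.image_mono hM.subset).trans (subset_logClosure _)
  | succ i ih =>
    intro φ hφ
    rcases mem_stage_succ_iff.1 hφ with hφ | ⟨d, hd, rfl, hpre, hneg⟩
    · exact logClosure_subset_logClosure_of_subset ih hφ
    · refine subset_logClosure _ ⟨d.concl, hM.closed d hd (fun p hp => ?_) (fun hn => ?_), rfl⟩
      · exact (Lit.toForm_mem_logClosure_iff hM.consistent p).1 (ih (hpre p hp))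
      · exact hneg ((Lit.neg_toForm_mem_logClosure_iff hM.consistent d.concl).2 hn)

lemma Kernel.exists_mem_stage {l : Lit V} (hl : DerivableIn D W M l) :
    ∃ i, l.toForm ∈ stage D W (logClosure (Lit.toForm '' M)) i := by
  induction hl with
  | base hl => exact ⟨0, _, hl, rfl⟩
  | step hd _ hc ih =>
    refine exists_concl_mem_stage hd ih fun hn => ?_
    exact hM.consistent _ hc ((Lit.neg_toForm_mem_logClosure_iff hM.consistent _).1 hn)

lemma Kernel.isExtension (hW : W.Finite) (hD : D.Finite) :
    NMU.IsExtension D W (logClosure (Lit.toForm '' M)) := by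
  refine (logClosure_subset_iUnion_extStage ((hM.finite hW hD).image _) ?_).antisymm
    (Set.iUnion_subset hM.stage_subset)
  rintro _ ⟨l, hl, rfl⟩
  exact Set.mem_iUnion.2 (hM.exists_mem_stage (hM.grounded l hl))

end KernelToExtension

/-- The literal-level analogue of Reiter's generating defaults of `E`. -/
def generators (D : Set (NMUDefault V)) (W : Set (Lit V)) (E : Set (Form V)) : Set (Lit V) :=
  W ∪ {l | ∃ d ∈ D, d.concl = l ∧ (∀ p ∈ d.pre, p.toForm ∈ E) ∧ Form.neg l.toForm ∉ E}

lemma generators_subset : generators D W E ⊆ W ∪ NMUDefault.concl '' D := by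
  rintro l (hl | ⟨d, hd, rfl, -⟩)
  exacts [Or.inl hl, Or.inr ⟨d, hd, rfl⟩]

section ExtensionToKernel

variable (hE : NMU.IsExtension D W E)
include hE

lemma IsExtension.toForm_generators_subset : Lit.toForm '' generators D W E ⊆ E := by
  rintro _ ⟨l, hl | ⟨d, hd, rfl, hpre, hneg⟩, rfl⟩
  · exact hE.mem_iff.2 ⟨0, l, hl, rfl⟩
  · exact hE.mem_iff.2 (exists_concl_mem_stage hd (fun p hp => hE.mem_iff.1 (hpre p hp)) hneg)

lemma IsExtension.generators_consistent (hW : LitConsistent W) :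
    LitConsistent (generators D W E) := by
  intro l hl hnl
  have hpair : ({l.toForm, l.negate.toForm} : Set (Form V)) ⊆ E := Set.insert_subset
    (hE.toForm_generators_subset ⟨l, hl, rfl⟩)
    (Set.singleton_subset_iff.2 (hE.toForm_generators_subset ⟨_, hnl, rfl⟩))
  have hEuniv : Set.univ ⊆ E := calc
    Set.univ = logClosure {l.toForm, l.negate.toForm} :=
      (logClosure_eq_univ (Set.mem_insert _ _) (Set.mem_insert_of_mem _ (Set.mem_singleton _))).symm
    _ ⊆ E := IsExtension.logClosure_subset hE (Set.toFinite _) hpair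
  -- An inconsistent `E` applies no default, so both literals come from `W`.
  have hgen_W : ∀ m ∈ generators D W E, m ∈ W := by
    rintro m (hm | ⟨-, -, -, -, hneg⟩)
    exacts [hm, absurd (hEuniv trivial) hneg]
  exact hW l (hgen_W l hl) (hgen_W _ hnl)

lemma IsExtension.stage_subset_logClosure_derivable (hW : LitConsistent W) (i : ℕ) :
    stage D W E i ⊆ logClosure (Lit.toForm ''
      {l ∈ generators D W E | DerivableIn D W (generators D W E) l}) := by
  have hK : LitConsistent {l ∈ generators D W E | DerivableIn D W (generators D W E) l} :=
    (hE.generators_consistent hW).subset fun _ hl => hl.1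
  induction i with
  | zero =>
    refine (Set.image_mono ?_).trans (subset_logClosure _)
    exact fun l hl => ⟨Or.inl hl, .base hl⟩
  | succ i ih =>
    intro φ hφ
    rcases mem_stage_succ_iff.1 hφ with hφ | ⟨d, hd, rfl, hpre, hneg⟩
    · exact logClosure_subset_logClosure_of_subset ih hφ
    · have hpre' : ∀ p ∈ d.pre, p ∈ generators D W E ∧ DerivableIn D W (generators D W E) p :=
        fun p hp => (Lit.toForm_mem_logClosure_iff hK p).1 (ih (hpre p hp))
      have hconcl : d.concl ∈ generators D W E :=
        Or.inr ⟨d, hd, rfl, fun p hp => IsExtension.extStage_subset hE i (hpre p hp), hneg⟩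
      exact subset_logClosure _
        ⟨d.concl, ⟨hconcl, .step hd (fun p hp => (hpre' p hp).2) hconcl⟩, rfl⟩

lemma IsExtension.subset_logClosure_derivable (hW : LitConsistent W) :
    E ⊆ logClosure (Lit.toForm ''
      {l ∈ generators D W E | DerivableIn D W (generators D W E) l}) :=
  hE.subset.trans (Set.iUnion_subset (hE.stage_subset_logClosure_derivable hW))

lemma IsExtension.eq_logClosure_generators (hW : LitConsistent W) (hWfin : W.Finite)
    (hD : D.Finite) : E = logClosure (Lit.toForm '' generators D W E) := by
  refine (hE.subset_logClosure_derivable hW |>.trans (logClosure_mono ?_)).antisymm ?_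
  · exact Set.image_mono fun _ hl => hl.1
  · refine IsExtension.logClosure_subset hE ?_ hE.toForm_generators_subset
    exact ((hWfin.union (hD.image _)).subset generators_subset).image _

lemma IsExtension.kernel_generators (hW : LitConsistent W) (hWfin : W.Finite) (hD : D.Finite) :
    Kernel D W (generators D W E) where
  consistent := hE.generators_consistent hW
  subset := Set.subset_union_left
  closed d hd hpre hneg := by
    refine Or.inr ⟨d, hd, rfl, fun p hp => hE.toForm_generators_subset ⟨p, hpre p hp, rfl⟩, ?_⟩
    rw [hE.eq_logClosure_generators hW hWfin hD,
      Lit.neg_toForm_mem_logClosure_iff (hE.generators_consistent hW)]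
    exact hneg
  grounded l hl := by
    have hK : LitConsistent {l ∈ generators D W E | DerivableIn D W (generators D W E) l} :=
      (hE.generators_consistent hW).subset fun _ hl => hl.1
    exact ((Lit.toForm_mem_logClosure_iff hK l).1
      (hE.subset_logClosure_derivable hW (hE.toForm_generators_subset ⟨l, hl, rfl⟩))).2

end ExtensionToKernel

theorem exists_kernel_superset (hB : LitConsistent B) (hWB : W ⊆ B)
    (hBd : ∀ l ∈ B, DerivableIn D W B l) : ∃ M, B ⊆ M ∧ Kernel D W M := by
  let good : Set (Set (Lit V)) :=
    {M | B ⊆ M ∧ LitConsistent M ∧ ∀ l ∈ M, DerivableIn D W M l}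
  have hchain : ∀ c ⊆ good, IsChain (· ⊆ ·) c → c.Nonempty →
      ∃ ub ∈ good, ∀ M ∈ c, M ⊆ ub := by
    intro c hc hchain ⟨M₀, hM₀⟩
    refine ⟨⋃₀ c, ⟨(hc hM₀).1.trans (Set.subset_sUnion_of_mem hM₀),
      LitConsistent.sUnion_of_isChain hchain fun M hM => (hc hM).2.1, ?_⟩,
      fun _ => Set.subset_sUnion_of_mem⟩
    rintro l ⟨M, hM, hl⟩
    exact ((hc hM).2.2 l hl).mono (Set.subset_sUnion_of_mem hM)
  obtain ⟨M, hBM, hmax⟩ := zorn_subset_nonempty good hchain B ⟨subset_rfl, hB, hBd⟩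
  obtain ⟨-, hMc, hMd⟩ := hmax.prop
  refine ⟨M, hBM, hMc, hWB.trans hBM, fun d hd hpre hneg => hmax.mem_of_prop_insert ?_, hMd⟩
  refine ⟨hBM.trans (Set.subset_insert _ _), hMc.insert hneg, ?_⟩
  rintro l (rfl | hl)
  · exact .step hd (fun p hp => (hMd p (hpre p hp)).mono (Set.subset_insert _ _))
      (Set.mem_insert _ _)
  · exact (hMd l hl).mono (Set.subset_insert _ _)

lemma influences_of_mem {t : Lit V} (ht : t ∈ S) : influences D S t :=
  ⟨t, ht, .refl⟩

lemma influences_negate_iff {l : Lit V} : influences D S l.negate ↔ influences D S l :=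
  Iff.rfl

lemma influences_concl_of_mem_pre {d : NMUDefault V} {p : Lit V} (hd : d ∈ D) (hp : p ∈ d.pre)
    (h : influences D S p) : influences D S d.concl :=
  let ⟨t, ht, hr⟩ := h
  ⟨t, ht, hr.tail ⟨d, hd, ⟨p, hp, rfl⟩, rfl⟩⟩

lemma DerivableIn.of_not_influences {B' : Set (Lit V)} {l : Lit V} (h : DerivableIn D B N l)
    (hl : ¬ influences D S l) (hB : B ⊆ B') (hNM : ∀ l ∈ N, ¬ influences D S l → l ∈ M) :
    DerivableIn D B' M l := by
  induction h with
  | base hb => exact .base (hB hb)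
  | step hd _ hc ih =>
    exact .step hd (fun p hp => ih p hp fun h => hl (influences_concl_of_mem_pre hd hp h))
      (hNM _ hc hl)

lemma Kernel.exists_kernel_union (hN : Kernel D W N) (hWS : LitConsistent (W ∪ S)) :
    ∃ M, Kernel D (W ∪ S) M ∧ ∀ l ∈ N, ¬ influences D S l → l ∈ M := by
  let B := {l | l ∈ N ∧ ¬ influences D S l} ∪ (W ∪ S)
  have hNWS : ∀ l ∈ N, ¬ influences D S l → l.negate ∉ W ∪ S := by
    rintro l hl hinf (hW | hS)
    · exact hN.consistent l hl (hN.subset hW)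
    · exact hinf (influences_negate_iff.1 (influences_of_mem hS))
  have hB : LitConsistent B := by
    rintro l (⟨hl, hinf⟩ | hl) (⟨hnl, hninf⟩ | hnl)
    · exact hN.consistent l hl hnl
    · exact hNWS l hl hinf hnl
    · exact hNWS _ hnl hninf (by rwa [Lit.negate_negate])
    · exact hWS l hl hnl
  obtain ⟨M, hBM, hM⟩ := exists_kernel_superset hB Set.subset_union_right <| by
    rintro l (⟨hl, hinf⟩ | hl)
    · exact (hN.grounded l hl).of_not_influences hinf Set.subset_union_left
        fun l hl hinf => Or.inl ⟨hl, hinf⟩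
    · exact .base hl
  exact ⟨M, hM, fun l hl hinf => hBM (Or.inl ⟨hl, hinf⟩)⟩

end NMU

/-- Incremental Lemma, monotonicity of brave reasoning. -/
theorem incremental_brave {V : Type} (D : Set (NMUDefault V)) (W S : Set (Lit V)) (q : Lit V)
    (hD : D.Finite) (hW : W.Finite) (hS : S.Finite)
    (hcons : LitConsistent (W ∪ S))
    (hinf : ¬ influences D S q)
    (h : ∃ E, NMU.IsExtension D W E ∧ q.toForm ∈ E) :
    ∃ E, NMU.IsExtension D (W ∪ S) E ∧ q.toForm ∈ E := by
  obtain ⟨E, hE, hq⟩ := h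
  have hWc : LitConsistent W := hcons.subset Set.subset_union_left
  have hEN := hE.eq_logClosure_generators hWc hW hD
  have hN := hE.kernel_generators hWc hW hD
  have hqN : q ∈ NMU.generators D W E :=
    (Lit.toForm_mem_logClosure_iff hN.consistent q).1 (hEN ▸ hq)
  obtain ⟨M, hM, hNM⟩ := hN.exists_kernel_union hcons
  exact ⟨_, hM.isExtension (hW.union hS) hD, subset_logClosure _ ⟨q, hNM q hqN hinf, rfl⟩⟩
end

section
/- Let Φ be a 3CNF formula and let (D(Φ),W(Φ)) be the NU default theory described in the context. For every S ⊆ W(Φ), each extension E of (D(Φ),W(Φ)_S) satisfies: for each xᵢ ∈ S, ¬xᵢ ∈ E and yᵢ ∈ E; and for each xᵢ ∈ W(Φ) \ S, xᵢ ∈ E. -/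
/-- A 3CNF formula over variables `Fin n` with `m` conjuncts is represented by the
function giving the `k`-th literal of the `j`-th clause. -/
def Sat3 {n m : ℕ} (Φ : Fin m → Fin 3 → Lit (Fin n)) : Prop :=
  ∃ τ : Fin n → Bool, ∀ j : Fin m, ∃ k : Fin 3, τ (Φ j k).letter = (Φ j k).pos

/-- The letters of the theory associated with a 3CNF `Φ`: the variables `xᵢ`,
the fresh letters `yᵢ` and the fresh letters `c_j`. -/
inductive PhiVar (n m : ℕ) : Type
  | X : Fin n → PhiVar n m
  | Y : Fin n → PhiVar n m
  | C : Fin m → PhiVar n m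

/-- `σ(xᵢ) = xᵢ` and `σ(¬xᵢ) = yᵢ`. -/
def sigmaMap {n m : ℕ} (t : Lit (Fin n)) : Lit (PhiVar n m) :=
  if t.pos then ⟨PhiVar.X t.letter, true⟩ else ⟨PhiVar.Y t.letter, true⟩

/-- The defaults `D(Φ) = D₁ ∪ D₂ ∪ D₃`, where
`D₁ = {xᵢ:¬yᵢ/¬yᵢ, :yᵢ/yᵢ}`, `D₂ = {σ(t_{j,k}):¬c_j/¬c_j}` and `D₃ = {:¬xᵢ/¬xᵢ}`. -/
def DPhi {n m : ℕ} (Φ : Fin m → Fin 3 → Lit (Fin n)) : Set (NMUDefault (PhiVar n m)) :=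
  { d | (∃ i, d = ⟨some ⟨PhiVar.X i, true⟩, ⟨PhiVar.Y i, false⟩⟩) ∨
        (∃ i, d = ⟨none, ⟨PhiVar.Y i, true⟩⟩) ∨
        (∃ j k, d = ⟨some (sigmaMap (Φ j k)), ⟨PhiVar.C j, false⟩⟩) ∨
        (∃ i, d = ⟨none, ⟨PhiVar.X i, false⟩⟩) }

/-- `W(Φ) = {x₁, …, xₙ}`. -/
def WPhi (n m : ℕ) : Set (Lit (PhiVar n m)) := { l | ∃ i, l = ⟨PhiVar.X i, true⟩ }

/-- Each stage is contained in the extension. -/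
lemma stage_subset {V : Type} {D : Set (Default V)} {W E : Set (Form V)}
    (hE : IsExtension D W E) (i : ℕ) : extStage D W E i ⊆ E := by
  intro φ hφ
  rw [hE]
  exact Set.mem_iUnion.mpr ⟨i, hφ⟩

/-- If a valuation satisfies `W` and the consequent of every fired default, then it
satisfies every stage of the extension. -/
lemma stages_sat {V : Type} {D : Set (Default V)} {W E : Set (Form V)}
    (hE : IsExtension D W E) (u : V → Prop)
    (hW : ∀ φ ∈ W, Form.sat u φ)
    (hD : ∀ d ∈ D, (∀ a ∈ d.pre, Form.sat u a) → (∀ b ∈ d.justs, Form.neg b ∉ E) →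
      d.concl ∈ E → Form.sat u d.concl) :
    ∀ i, ∀ φ ∈ extStage D W E i, Form.sat u φ := by
  intro i
  induction i with
  | zero => exact hW
  | succ i ih =>
    rintro φ (h | ⟨d, hd, rfl, hpre, hjust⟩)
    · exact h u ih
    · refine hD d hd (fun a ha => ih a (hpre a ha)) hjust ?_
      exact stage_subset hE (i + 1) (Or.inr ⟨d, hd, rfl, hpre, hjust⟩)

/-- Every formula in an extension is satisfied by such a valuation. -/
lemma ext_sat {V : Type} {D : Set (Default V)} {W E : Set (Form V)}
    (hE : IsExtension D W E) (u : V → Prop)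
    (hW : ∀ φ ∈ W, Form.sat u φ)
    (hD : ∀ d ∈ D, (∀ a ∈ d.pre, Form.sat u a) → (∀ b ∈ d.justs, Form.neg b ∉ E) →
      d.concl ∈ E → Form.sat u d.concl) :
    ∀ φ ∈ E, Form.sat u φ := by
  intro φ hφ
  rw [hE] at hφ
  obtain ⟨i, hi⟩ := Set.mem_iUnion.mp hφ
  exact stages_sat hE u hW hD i φ hi

/-- For every `S ⊆ W(Φ)`, each extension `E` of `(D(Φ), W(Φ)_S)` is such that:
for each `xᵢ ∈ S`, `¬xᵢ ∈ E` and `yᵢ ∈ E`; and for each `xᵢ ∉ S`, `xᵢ ∈ E`. -/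
theorem every_extension_claim {n m : ℕ} (Φ : Fin m → Fin 3 → Lit (Fin n))
    (S : Set (Lit (PhiVar n m))) (hS : S ⊆ WPhi n m)
    (E : Set (Form (PhiVar n m))) (hE : NMU.IsExtension (DPhi Φ) (WPhi n m \ S) E) :
    (∀ i : Fin n, (⟨PhiVar.X i, true⟩ : Lit (PhiVar n m)) ∈ S →
      Lit.toForm (⟨PhiVar.X i, false⟩ : Lit (PhiVar n m)) ∈ E ∧
      Lit.toForm (⟨PhiVar.Y i, true⟩ : Lit (PhiVar n m)) ∈ E) ∧
    (∀ i : Fin n, (⟨PhiVar.X i, true⟩ : Lit (PhiVar n m)) ∉ S →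
      Lit.toForm (⟨PhiVar.X i, true⟩ : Lit (PhiVar n m)) ∈ E) := by
  have hE' : IsExtension (NMUDefault.toDefault '' DPhi Φ)
      (Lit.toForm '' (WPhi n m \ S)) E := hE
  set D' := NMUDefault.toDefault '' DPhi Φ with hD'def
  set W' := Lit.toForm '' (WPhi n m \ S) with hW'def
  -- membership of x_i in W' for i not selected
  have hmemW : ∀ i : Fin n, (⟨PhiVar.X i, true⟩ : Lit (PhiVar n m)) ∉ S →
      Form.atom (PhiVar.X i) ∈ W' := by
    intro i hi
    exact ⟨⟨PhiVar.X i, true⟩, ⟨⟨i, rfl⟩, hi⟩, rfl⟩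
  -- the double negation of x_i is in E when x_i is kept in W
  have negnegX : ∀ i : Fin n, (⟨PhiVar.X i, true⟩ : Lit (PhiVar n m)) ∉ S →
      Form.neg (Form.neg (Form.atom (PhiVar.X i))) ∈ E := by
    intro i hi
    refine stage_subset hE' 1 (Or.inl ?_)
    intro v hv
    have := hv _ (hmemW i hi)
    simp only [Form.sat] at this ⊢
    exact fun h => h this
  constructor
  · intro i hi
    -- the valuation u
    set u : PhiVar n m → Prop := fun a =>
      match a with
      | .X j => (⟨PhiVar.X j, true⟩ : Lit (PhiVar n m)) ∉ S
      | .Y j => j = i ∨ Form.neg (Form.atom (PhiVar.Y j)) ∉ E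
      | .C j => Form.neg (Form.atom (PhiVar.C j)) ∉ E
      with hu
    have hW : ∀ φ ∈ W', Form.sat u φ := by
      rintro φ ⟨l, ⟨⟨j, rfl⟩, hl⟩, rfl⟩
      simpa [Lit.toForm, Form.sat, hu] using hl
    have hD : ∀ d ∈ D', (∀ a ∈ d.pre, Form.sat u a) →
        (∀ b ∈ d.justs, Form.neg b ∉ E) → d.concl ∈ E → Form.sat u d.concl := by
      rintro d ⟨d₀, hd₀, rfl⟩ hpre hjust hconcl
      rcases hd₀ with ⟨j, rfl⟩ | ⟨j, rfl⟩ | ⟨j, k, rfl⟩ | ⟨j, rfl⟩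
      · -- D₁a : x_j : ¬y_j / ¬y_j
        have hx : Form.sat u (Form.atom (PhiVar.X j)) := by
          apply hpre
          simp [NMUDefault.toDefault, Lit.toForm]
        have hx' : (⟨PhiVar.X j, true⟩ : Lit (PhiVar n m)) ∉ S := hx
        have hc : Form.neg (Form.atom (PhiVar.Y j)) ∈ E := by
          simpa [NMUDefault.toDefault, Lit.toForm] using hconcl
        show Form.sat u (Lit.toForm ⟨PhiVar.Y j, false⟩)
        intro h0
        have h0' : j = i ∨ Form.neg (Form.atom (PhiVar.Y j)) ∉ E := h0
        rcases h0' with rfl | h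
        · exact hx' hi
        · exact h hc
      · -- D₁b : : y_j / y_j
        have hj : Form.neg (Form.atom (PhiVar.Y j)) ∉ E := by
          have := hjust (Lit.toForm ⟨PhiVar.Y j, true⟩) (by simp [NMUDefault.toDefault])
          simpa [Lit.toForm] using this
        show Form.sat u (Lit.toForm ⟨PhiVar.Y j, true⟩)
        simp only [Lit.toForm, if_pos rfl, Form.sat, hu]
        exact Or.inr hj
      · -- D₂ : σ(t) : ¬c_j / ¬c_j
        have hc : Form.neg (Form.atom (PhiVar.C j)) ∈ E := by
          simpa [NMUDefault.toDefault, Lit.toForm] using hconcl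
        show Form.sat u (Lit.toForm ⟨PhiVar.C j, false⟩)
        intro h0
        exact (show Form.neg (Form.atom (PhiVar.C j)) ∉ E from h0) hc
      · -- D₃ : : ¬x_j / ¬x_j
        have hj : Form.neg (Form.neg (Form.atom (PhiVar.X j))) ∉ E := by
          have := hjust (Lit.toForm ⟨PhiVar.X j, false⟩) (by simp [NMUDefault.toDefault])
          simpa [Lit.toForm] using this
        show Form.sat u (Lit.toForm ⟨PhiVar.X j, false⟩)
        intro hx
        have hx' : (⟨PhiVar.X j, true⟩ : Lit (PhiVar n m)) ∉ S := hx
        exact hj (negnegX j hx')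
    have hsat : ∀ φ ∈ E, Form.sat u φ := ext_sat hE' u hW hD
    -- ¬¬x_i ∉ E
    have hnn : Form.neg (Form.neg (Form.atom (PhiVar.X i))) ∉ E := by
      intro h
      have := hsat _ h
      simp only [Form.sat, hu] at this
      exact this (fun h' => h' hi)
    -- ¬y_i ∉ E
    have hny : Form.neg (Form.atom (PhiVar.Y i)) ∉ E := by
      intro h
      have := hsat _ h
      simp only [Form.sat, hu] at this
      exact this (Or.inl trivial)
    constructor
    · -- ¬x_i ∈ E : the default :¬x_i/¬x_i fires at stage 1
      refine stage_subset hE' 1 (Or.inr ?_)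
      refine ⟨NMUDefault.toDefault ⟨none, ⟨PhiVar.X i, false⟩⟩,
        ⟨⟨none, ⟨PhiVar.X i, false⟩⟩, Or.inr (Or.inr (Or.inr ⟨i, rfl⟩)), rfl⟩, rfl, ?_, ?_⟩
      · intro a ha
        simp [NMUDefault.toDefault] at ha
      · intro b hb
        have : b = Lit.toForm (⟨PhiVar.X i, false⟩ : Lit (PhiVar n m)) := by
          simpa [NMUDefault.toDefault] using hb
        subst this
        simpa [Lit.toForm] using hnn
    · -- y_i ∈ E : the default :y_i/y_i fires at stage 1
      refine stage_subset hE' 1 (Or.inr ?_)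
      refine ⟨NMUDefault.toDefault ⟨none, ⟨PhiVar.Y i, true⟩⟩,
        ⟨⟨none, ⟨PhiVar.Y i, true⟩⟩, Or.inr (Or.inl ⟨i, rfl⟩), rfl⟩, rfl, ?_, ?_⟩
      · intro a ha
        simp [NMUDefault.toDefault] at ha
      · intro b hb
        have : b = Lit.toForm (⟨PhiVar.Y i, true⟩ : Lit (PhiVar n m)) := by
          simpa [NMUDefault.toDefault] using hb
        subst this
        simpa [Lit.toForm] using hny
  · intro i hi
    exact stage_subset hE' 0 ⟨⟨PhiVar.X i, true⟩, ⟨⟨i, rfl⟩, hi⟩, rfl⟩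
end

section
/- Let Δ=(D,W) be an NMU default theory, let l be a literal and let E be an extension of Δ with signature set liter(E). Then l ∈ liter(E) if and only if there is a proof of l w.r.t. Δ and liter(E). -/
/-- The Kautz–Selman conditions on a generating sequence `seq` of defaults of the NMU theory
`(D, W)` together with its stage sets `Es`: `E₀ = W`, `Eᵢ = E_{i-1} ∪ concl(δᵢ)`,
`pre(δᵢ) ⊆ E_{i-1}`, no justification of a `δᵢ` is negated in `Eₙ`, and no further default
of `D` is applicable to `Eₙ`. -/
def KSConditions {V : Type} (D : Set (NMUDefault V)) (W : Set (Lit V))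
    (seq : List (NMUDefault V)) (Es : ℕ → Set (Lit V)) : Prop :=
  (∀ d ∈ seq, d ∈ D) ∧ Es 0 = W ∧
  (∀ i (h : i < seq.length), Es (i + 1) = Es i ∪ {(seq.get ⟨i, h⟩).concl}) ∧
  (∀ i (h : i < seq.length), ∀ p ∈ (seq.get ⟨i, h⟩).pre, p ∈ Es i) ∧
  (∀ i (h : i < seq.length), ((seq.get ⟨i, h⟩).concl).negate ∉ Es seq.length) ∧
  (¬ ∃ d ∈ D, (∀ p ∈ d.pre, p ∈ Es seq.length) ∧ d.concl ∉ Es seq.length ∧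
      d.concl.negate ∉ Es seq.length)

/-- `En` is the signature set of an extension of the NMU theory `(D, W)` (the extension
itself being the logical closure of `En`). -/
def IsSignatureSet {V : Type} (D : Set (NMUDefault V)) (W : Set (Lit V))
    (En : Set (Lit V)) : Prop :=
  ∃ seq Es, KSConditions D W seq Es ∧ En = Es seq.length

/-- `seq = δ₁, …, δₙ` is a proof of the literal `l` w.r.t. the NMU theory `(D, W)` and the
set of literals `E`: the defaults are from `D`, `l` is the consequent of `δₙ`, `¬l ∉ E`,
and each `δᵢ` is prerequisite-free, or its prerequisite is in `W`, or `δ₁, …, δ_{i-1}` is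
a proof of its prerequisite. -/
def IsProofList {V : Type} (D : Set (NMUDefault V)) (W E : Set (Lit V))
    (seq : List (NMUDefault V)) (l : Lit V) : Prop :=
  (∀ d ∈ seq, d ∈ D) ∧
  (∃ h : seq ≠ [], (seq.getLast h).concl = l) ∧
  l.negate ∉ E ∧
  ∀ i, (h : i < seq.length) → ∀ p ∈ (seq.get ⟨i, h⟩).pre,
    p ∈ W ∨ IsProofList D W E (seq.take i) p
termination_by seq.length
decreasing_by simp [List.length_take]; omega

/-- There is a proof of `l` w.r.t. `(D, W)` and `E`: either `l` by itself, if `l ∈ W`,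
or a sequence of defaults forming a proof of `l`. -/
def HasProof {V : Type} (D : Set (NMUDefault V)) (W E : Set (Lit V)) (l : Lit V) : Prop :=
  l ∈ W ∨ ∃ seq, IsProofList D W E seq l

/-! Each literal of the signature set has a proof because the generating defaults are applied
in order, so a proof of the consequent of `δₖ` is a proof of its prerequisite (which occurs
earlier, or in `W`) followed by `δₖ`. Conversely, a proof only applies defaults whose
justification is consistent with the signature set, and by maximality of the generating
sequence the signature set is closed under such defaults, so by induction on the length of
the proof its conclusion lies in it. -/

section

variable {V : Type} {D : Set (NMUDefault V)} {W E S : Set (Lit V)}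

theorem isProofList_singleton {d : NMUDefault V} (hd : d ∈ D) (hneg : d.concl.negate ∉ E)
    (hpre : ∀ p ∈ d.pre, p ∈ W) :
    IsProofList D W E [d] d.concl := by
  rw [IsProofList]
  refine ⟨by simpa using hd, ⟨List.cons_ne_nil _ _, rfl⟩, hneg, ?_⟩
  intro i hi p hp
  obtain rfl : i = 0 := by simpa using hi
  exact Or.inl (hpre p hp)

theorem IsProofList.append_singleton {c : List (NMUDefault V)} {q : Lit V} {d : NMUDefault V}
    (hc : IsProofList D W E c q) (hd : d ∈ D) (hneg : d.concl.negate ∉ E)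
    (hpre : d.pre = some q) :
    IsProofList D W E (c ++ [d]) d.concl := by
  have hc' := hc
  rw [IsProofList] at hc' ⊢
  obtain ⟨hcD, -, -, hsteps⟩ := hc'
  refine ⟨?_, ⟨by simp, by simp⟩, hneg, ?_⟩
  · intro e he
    rcases List.mem_append.1 he with he | he
    · exact hcD e he
    · rw [List.mem_singleton.1 he]; exact hd
  · intro i hi p hp
    rcases Nat.lt_or_eq_of_le (Nat.lt_succ_iff.1 (by simpa using hi)) with hlt | rfl
    · have hget : (c ++ [d]).get ⟨i, hi⟩ = c.get ⟨i, hlt⟩ := by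
        simp [List.getElem_append_left hlt]
      rw [List.take_append_of_le_length hlt.le]
      exact hsteps i hlt p (hget ▸ hp)
    · have hget : (c ++ [d]).get ⟨c.length, hi⟩ = d := by simp
      rw [hget, hpre, Option.mem_some_iff] at hp
      subst hp
      rw [List.take_left]
      exact Or.inr hc

theorem hasProof_concl {d : NMUDefault V} (hd : d ∈ D) (hneg : d.concl.negate ∉ E)
    (hpre : ∀ p ∈ d.pre, HasProof D W E p) :
    HasProof D W E d.concl := by
  right
  rcases hq : d.pre with _ | q
  · exact ⟨[d], isProofList_singleton hd hneg (by simp [hq])⟩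
  · rcases hpre q hq with hqW | ⟨c, hc⟩
    · exact ⟨[d], isProofList_singleton hd hneg (by simpa [hq] using hqW)⟩
    · exact ⟨c ++ [d], hc.append_singleton hd hneg hq⟩

theorem IsProofList.mem_of_closed {c : List (NMUDefault V)} {l : Lit V}
    (hc : IsProofList D W S c l) (hWS : W ⊆ S)
    (hclosed : ∀ d ∈ D, (∀ p ∈ d.pre, p ∈ S) → d.concl.negate ∉ S → d.concl ∈ S) :
    l ∈ S := by
  rw [IsProofList] at hc
  obtain ⟨hcD, ⟨hne, rfl⟩, hneg, hsteps⟩ := hc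
  have hlast : c.length - 1 < c.length := by
    have := List.length_pos_iff.2 hne
    omega
  have hget : c.get ⟨c.length - 1, hlast⟩ = c.getLast hne := by
    simp [List.getLast_eq_getElem]
  refine hclosed _ (hcD _ (List.getLast_mem hne)) (fun p hp => ?_) hneg
  rcases hsteps _ hlast p (hget ▸ hp) with hpW | hp'
  · exact hWS hpW
  · exact hp'.mem_of_closed hWS hclosed
termination_by c.length
decreasing_by simp only [List.length_take]; omega

end

namespace KSConditions

variable {V : Type} {D : Set (NMUDefault V)} {W : Set (Lit V)}
  {seq : List (NMUDefault V)} {Es : ℕ → Set (Lit V)}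

theorem subset_stage (hKS : KSConditions D W seq Es) :
    ∀ k ≤ seq.length, W ⊆ Es k
  | 0, _ => hKS.2.1.ge
  | k + 1, hk => by
    rw [hKS.2.2.1 k hk]
    exact (hKS.subset_stage k (Nat.le_of_succ_le hk)).trans Set.subset_union_left

theorem concl_mem_of_applicable (hKS : KSConditions D W seq Es) {d : NMUDefault V}
    (hd : d ∈ D) (hpre : ∀ p ∈ d.pre, p ∈ Es seq.length)
    (hneg : d.concl.negate ∉ Es seq.length) :
    d.concl ∈ Es seq.length :=
  by_contra fun hnot => hKS.2.2.2.2.2 ⟨d, hd, hpre, hnot, hneg⟩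

theorem hasProof_of_mem_stage (hKS : KSConditions D W seq Es) :
    ∀ k ≤ seq.length, ∀ p ∈ Es k, HasProof D W (Es seq.length) p
  | 0, _, p, hp => Or.inl (hKS.2.1 ▸ hp)
  | k + 1, hk, p, hp => by
    have hk' : k < seq.length := hk
    rw [hKS.2.2.1 k hk'] at hp
    rcases hp with hp | rfl
    · exact hKS.hasProof_of_mem_stage k hk'.le p hp
    · exact hasProof_concl (hKS.1 _ (List.get_mem _ _)) (hKS.2.2.2.2.1 k hk')
        fun q hq => hKS.hasProof_of_mem_stage k hk'.le q (hKS.2.2.2.1 k hk' q hq)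

end KSConditions

theorem in_signature_iff_proof_general {V : Type} (D : Set (NMUDefault V)) (W : Set (Lit V))
    (En : Set (Lit V))
    (hsig : IsSignatureSet D W En) (l : Lit V) :
    l ∈ En ↔ HasProof D W En l := by
  obtain ⟨seq, Es, hKS, rfl⟩ := hsig
  have hW := hKS.subset_stage _ le_rfl
  refine ⟨hKS.hasProof_of_mem_stage _ le_rfl l, ?_⟩
  rintro (hl | ⟨c, hc⟩)
  · exact hW hl
  · exact hc.mem_of_closed hW fun d hd => hKS.concl_mem_of_applicable hd

/-- If `En = liter(E)` is the signature set of an extension `E` of the NMU theory `(D, W)`,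
then a literal `l` is in `En` iff there is a proof of `l` w.r.t. `(D, W)` and `En`. -/
theorem in_signature_iff_proof {V : Type} (D : Set (NMUDefault V)) (W : Set (Lit V))
    (hD : D.Finite) (hW : W.Finite) (En : Set (Lit V))
    (hsig : IsSignatureSet D W En) (l : Lit V) :
    l ∈ En ↔ HasProof D W En l :=
  in_signature_iff_proof_general D W En hsig l
end

section
/- Let Δ=(D,W) be an NMU default theory and let E be an extension of Δ with generating-default sequence δ₁,…,δₙ and signature set liter(E). Then for every literal l ∈ liter(E), either l ∈ W (so l itself is a proof of l), or some subsequence of δ₁,…,δₙ is a proof of l w.r.t. Δ and liter(E). -/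
namespace IsProofList

variable {V : Type} {D : Set (NMUDefault V)} {W E : Set (Lit V)}

theorem append_singleton_s15 {s : List (NMUDefault V)} {d : NMUDefault V} {l : Lit V}
    (hsD : ∀ d ∈ s, d ∈ D)
    (hs : ∀ i (h : i < s.length), ∀ p ∈ (s.get ⟨i, h⟩).pre,
      p ∈ W ∨ IsProofList D W E (s.take i) p)
    (hd : d ∈ D) (hpre : ∀ p ∈ d.pre, p ∈ W ∨ IsProofList D W E s p)
    (hl : d.concl = l) (hneg : l.negate ∉ E) :
    IsProofList D W E (s ++ [d]) l := by
  rw [IsProofList]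
  refine ⟨?_, ⟨by simp, by simpa using hl⟩, hneg, fun i hi p hp => ?_⟩
  · simpa [or_imp, forall_and] using ⟨hsD, hd⟩
  · rcases Nat.lt_succ_iff_lt_or_eq.mp (by simpa using hi) with hi | rfl
    · rw [List.take_append_of_le_length hi.le]
      exact hs i hi p (by simpa [List.getElem_append_left hi] using hp)
    · rw [List.take_left]
      exact hpre p (by simpa using hp)

theorem singleton {d : NMUDefault V} {l : Lit V} (hd : d ∈ D) (hpre : ∀ p ∈ d.pre, p ∈ W)
    (hl : d.concl = l) (hneg : l.negate ∉ E) : IsProofList D W E [d] l :=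
  append_singleton_s15 (s := []) (by simp) (by simp) hd (fun p hp => .inl (hpre p hp)) hl hneg

theorem append_of_pre {s : List (NMUDefault V)} {d : NMUDefault V} {p l : Lit V}
    (hs : IsProofList D W E s p) (hd : d ∈ D) (hpre : d.pre = some p)
    (hl : d.concl = l) (hneg : l.negate ∉ E) : IsProofList D W E (s ++ [d]) l := by
  have hs' := hs
  rw [IsProofList] at hs'
  exact append_singleton_s15 hs'.1 hs'.2.2.2 hd (by simp [hpre, hs]) hl hneg

end IsProofList

section GeneratingSequence

variable {V : Type} {D : Set (NMUDefault V)} {W E : Set (Lit V)}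
  {seq : List (NMUDefault V)} {Es : ℕ → Set (Lit V)}

/-- The consequent of `seq[i]` is proved by a proof of its prerequisite, drawn from `seq.take i`,
followed by `seq[i]` itself. -/
theorem exists_sublist_take_isProofList_of_mem (hseqD : ∀ d ∈ seq, d ∈ D) (h0 : Es 0 ⊆ W)
    (hstep : ∀ i (h : i < seq.length), Es (i + 1) = Es i ∪ {(seq.get ⟨i, h⟩).concl})
    (hpre : ∀ i (h : i < seq.length), ∀ p ∈ (seq.get ⟨i, h⟩).pre, p ∈ Es i)
    (hneg : ∀ i (h : i < seq.length), (seq.get ⟨i, h⟩).concl.negate ∉ E) :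
    ∀ i ≤ seq.length, ∀ l ∈ Es i, l ∈ W ∨
      ∃ s : List (NMUDefault V), s.Sublist (seq.take i) ∧ IsProofList D W E s l := by
  intro i
  induction i with
  | zero => exact fun _ l hl => .inl (h0 hl)
  | succ i ih =>
    intro hi l hl
    have hi' : i < seq.length := hi
    have hsnoc : ∀ s : List (NMUDefault V), s.Sublist (seq.take i) →
        (s ++ [seq[i]]).Sublist (seq.take (i + 1)) := fun s hs =>
      List.take_concat_get' seq i hi ▸ hs.append (List.Sublist.refl _)
    rw [hstep i hi, Set.mem_union, Set.mem_singleton_iff] at hl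
    rcases hl with hl | rfl
    · refine (ih hi'.le l hl).imp_right fun ⟨s, hs, hproof⟩ => ⟨s, ?_, hproof⟩
      exact (List.sublist_append_left _ _).trans (hsnoc s hs)
    · right
      have hd : seq[i] ∈ D := hseqD _ (List.getElem_mem hi)
      rcases hp : seq[i].pre with _ | p
      · exact ⟨[seq[i]], hsnoc [] (List.nil_sublist _),
          .singleton hd (by simp [hp]) rfl (hneg i hi)⟩
      rcases ih hi'.le p (hpre i hi p hp) with hpW | ⟨s, hs, hproof⟩
      · exact ⟨[seq[i]], hsnoc [] (List.nil_sublist _),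
          .singleton hd (by simp [hp, hpW]) rfl (hneg i hi)⟩
      · exact ⟨s ++ [seq[i]], hsnoc s hs, hproof.append_of_pre hd hp rfl (hneg i hi)⟩

end GeneratingSequence

theorem generating_sublist_proof_general {V : Type} (D : Set (NMUDefault V)) (W : Set (Lit V))
    (seq : List (NMUDefault V)) (Es : ℕ → Set (Lit V))
    (hKS : KSConditions D W seq Es) :
    ∀ l ∈ Es seq.length, l ∈ W ∨
      ∃ seq' : List (NMUDefault V), seq'.Sublist seq ∧
        IsProofList D W (Es seq.length) seq' l := by
  obtain ⟨hseqD, h0, hstep, hpre, hneg, -⟩ := hKS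
  intro l hl
  simpa using exists_sublist_take_isProofList_of_mem hseqD h0.le hstep hpre hneg _ le_rfl l hl

/-- If `seq = δ₁, …, δₙ` is a generating-default sequence of an extension of the NMU theory
`(D, W)` with signature set `Eₙ`, then every literal `l ∈ Eₙ` is either in `W` (so `l`
itself is a proof of `l`) or has a proof which is a subsequence of `δ₁, …, δₙ`. -/
theorem generating_sublist_proof {V : Type} (D : Set (NMUDefault V)) (W : Set (Lit V))
    (hD : D.Finite) (hW : W.Finite)
    (seq : List (NMUDefault V)) (Es : ℕ → Set (Lit V))
    (hKS : KSConditions D W seq Es) :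
    ∀ l ∈ Es seq.length, l ∈ W ∨
      ∃ seq' : List (NMUDefault V), seq'.Sublist seq ∧
        IsProofList D W (Es seq.length) seq' l :=
  generating_sublist_proof_general D W seq Es hKS
end
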